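/- arXiv:math/0003179 — 4 statements merged into one kernel-verified Lean document; each statement's English description precedes it below -/
import Mathlib

section
/- The rational map (u,v) ↦ (x,y) = (u^n v^{-ℓ}, u^ℓ v^{n-ℓ}) sends any point of the affine Fermat curve u^Q + v^Q + 1 = 0 with v ≠ 0, where Q = n^2 - nℓ + ℓ^2, to a point of the affine generalized Hurwitz curve x^n y^ℓ + y^n + x^ℓ = 0. -/
/-! Write `n = a + ℓ`, so `Q = a² + aℓ + ℓ²`. Since `x v^ℓ = u^n`, multiplying the Hurwitz
polynomial at `(x, y)` by `v^{ℓ²}` gives `u^{nℓ} (u^Q + v^Q + 1)`, an identity valid in any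
commutative ring; it vanishes on the Fermat curve, and `v^{ℓ²} ≠ 0`. -/

theorem hurwitz_mul_pow_eq_mul_fermat {R : Type*} [CommRing R] {a ℓ : ℕ} {u v x : R}
    (hx : x * v ^ ℓ = u ^ (a + ℓ)) :
    (x ^ (a + ℓ) * (u ^ ℓ * v ^ a) ^ ℓ + (u ^ ℓ * v ^ a) ^ (a + ℓ) + x ^ ℓ) * v ^ ℓ ^ 2
      = u ^ ((a + ℓ) * ℓ) * (u ^ (a ^ 2 + a * ℓ + ℓ ^ 2) + v ^ (a ^ 2 + a * ℓ + ℓ ^ 2) + 1) :=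
  calc _ = (x * v ^ ℓ) ^ (a + ℓ) * u ^ ℓ ^ 2 + u ^ ((a + ℓ) * ℓ) * v ^ (a ^ 2 + a * ℓ + ℓ ^ 2)
        + (x * v ^ ℓ) ^ ℓ := by ring
    _ = _ := by rw [hx]; ring

theorem Nat.add_sq_sub_add_mul_add_sq (a ℓ : ℕ) :
    (a + ℓ) ^ 2 - (a + ℓ) * ℓ + ℓ ^ 2 = a ^ 2 + a * ℓ + ℓ ^ 2 := by
  rw [show (a + ℓ) ^ 2 = a ^ 2 + a * ℓ + (a + ℓ) * ℓ by ring, Nat.add_sub_cancel]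

theorem stmt6_general {K : Type*} [Field K] (n ℓ : ℕ) (hn : ℓ ≤ n)
    (u v : K) (hv : v ≠ 0)
    (h : u ^ (n ^ 2 - n * ℓ + ℓ ^ 2) + v ^ (n ^ 2 - n * ℓ + ℓ ^ 2) + 1 = 0) :
    (u ^ n / v ^ ℓ) ^ n * (u ^ ℓ * v ^ (n - ℓ)) ^ ℓ
      + (u ^ ℓ * v ^ (n - ℓ)) ^ n + (u ^ n / v ^ ℓ) ^ ℓ = 0 := by
  obtain ⟨a, rfl⟩ := Nat.exists_eq_add_of_le' hn
  rw [Nat.add_sq_sub_add_mul_add_sq] at h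
  rw [Nat.add_sub_cancel]
  have key := hurwitz_mul_pow_eq_mul_fermat (div_mul_cancel₀ (u ^ (a + ℓ)) (pow_ne_zero ℓ hv))
  rw [h, mul_zero] at key
  exact (mul_eq_zero.mp key).resolve_right (pow_ne_zero _ hv)

/-- The map `(u,v) ↦ (u^n/v^ℓ, u^ℓ v^{n-ℓ})` sends the affine Fermat curve
`u^Q + v^Q + 1 = 0`, `Q = n^2 - nℓ + ℓ^2` (with `v ≠ 0`), to the affine
generalized Hurwitz curve `x^n y^ℓ + y^n + x^ℓ = 0`. -/
theorem stmt6 {K : Type*} [Field K] (n ℓ : ℕ) (hl : 2 ≤ ℓ) (hn : ℓ ≤ n)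
    (u v : K) (hv : v ≠ 0)
    (h : u ^ (n ^ 2 - n * ℓ + ℓ ^ 2) + v ^ (n ^ 2 - n * ℓ + ℓ ^ 2) + 1 = 0) :
    (u ^ n / v ^ ℓ) ^ n * (u ^ ℓ * v ^ (n - ℓ)) ^ ℓ
      + (u ^ ℓ * v ^ (n - ℓ)) ^ n + (u ^ n / v ^ ℓ) ^ ℓ = 0 :=
  stmt6_general n ℓ hn u v hv h
end

section
/- Let n ≥ 2 and let H be the numerical semigroup generated by S = {s(n-1)+1 : s = 1, ..., n}. Then the number of gaps of H, i.e. #(ℕ \ H), equals n(n-1)/2. -/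
/-!
Put `d = n - 1`, so the generators are `s * d + 1` for `1 ≤ s ≤ d + 1`. Every positive integer
is uniquely `q * d + i` with `1 ≤ i ≤ d`, and it lies in `H` exactly when `i ≤ q`: this condition
is stable under addition and holds for the generators, and conversely an element with `i ≤ q` is
a generator or lies `n = d + 1` above a smaller such element. The gaps are therefore the numbers
`q * d + i` with `q < i ≤ d`, and there are `∑_{i < n} i = n(n-1)/2` of them.
-/

open Finset

lemma exists_eq_mul_add_of_pos {d m : ℕ} (hd : 0 < d) (hm : 0 < m) :
    ∃ q i, 0 < i ∧ i ≤ d ∧ m = q * d + i :=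
  ⟨(m - 1) / d, (m - 1) % d + 1, by omega, Nat.mod_lt _ hd,
    by have := Nat.div_add_mod' (m - 1) d; omega⟩

lemma mul_add_eq_mul_add_iff {d q i q' i' : ℕ} (hi : 0 < i) (hid : i ≤ d) (hi' : 0 < i')
    (hid' : i' ≤ d) : q * d + i = q' * d + i' ↔ q = q' ∧ i = i' := by
  refine ⟨fun h => ?_, fun ⟨hq, hi⟩ => by rw [hq, hi]⟩
  rcases lt_trichotomy q q' with hlt | rfl | hlt
  · have : q * d + d ≤ q' * d := by nlinarith
    omega
  · omega
  · have : q' * d + d ≤ q * d := by nlinarith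
    omega

abbrev hurwitzSemigroup (d : ℕ) : AddSubmonoid ℕ :=
  AddSubmonoid.closure {m | ∃ s, 1 ≤ s ∧ s ≤ d + 1 ∧ m = s * d + 1}

namespace hurwitzSemigroup

variable {d q i : ℕ}

lemma le_of_mul_add_mem (hi : 0 < i) (hid : i ≤ d) (hm : q * d + i ∈ hurwitzSemigroup d) :
    i ≤ q := by
  suffices h : ∀ m ∈ hurwitzSemigroup d,
      m = 0 ∨ ∃ q i, 0 < i ∧ i ≤ d ∧ i ≤ q ∧ m = q * d + i by
    obtain h0 | ⟨q', i', hi', hid', hiq', heq⟩ := h _ hm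
    · omega
    · obtain ⟨rfl, rfl⟩ := (mul_add_eq_mul_add_iff hi hid hi' hid').1 heq
      exact hiq'
  intro m hm
  induction hm using AddSubmonoid.closure_induction with
  | mem m hm =>
    obtain ⟨s, hs, hsd, rfl⟩ := hm
    exact .inr ⟨s, 1, one_pos, by omega, hs, rfl⟩
  | zero => exact .inl rfl
  | add m₁ m₂ _ _ ih₁ ih₂ =>
    obtain rfl | ⟨q₁, i₁, hi₁, hid₁, hiq₁, rfl⟩ := ih₁
    · simpa using ih₂
    obtain rfl | ⟨q₂, i₂, hi₂, hid₂, hiq₂, rfl⟩ := ih₂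
    · exact .inr ⟨q₁, i₁, hi₁, hid₁, hiq₁, rfl⟩
    right
    by_cases hcarry : i₁ + i₂ ≤ d
    · exact ⟨q₁ + q₂, i₁ + i₂, by omega, hcarry, by omega, by ring⟩
    · refine ⟨q₁ + q₂ + 1, i₁ + i₂ - d, by omega, by omega, by omega, ?_⟩
      have : (q₁ + q₂ + 1) * d = q₁ * d + q₂ * d + d := by ring
      omega

lemma mul_add_mem (hi : 0 < i) (hid : i ≤ d) (hiq : i ≤ q) :
    q * d + i ∈ hurwitzSemigroup d := by
  induction q using Nat.strong_induction_on generalizing i with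
  | _ q ih =>
    have hgen : ∀ s, 1 ≤ s → s ≤ d + 1 → s * d + 1 ∈ hurwitzSemigroup d :=
      fun s hs hsd => AddSubmonoid.subset_closure ⟨s, hs, hsd, rfl⟩
    -- Unless `q * d + i` is a generator, subtracting the generator `d + 1` leaves an element
    -- of the same form with smaller `q`.
    obtain ⟨q, rfl⟩ : ∃ q', q = q' + 1 := ⟨q - 1, by omega⟩
    by_cases hi1 : i = 1
    · subst hi1
      by_cases hqd : q + 1 ≤ d + 1
      · exact hgen _ le_add_self hqd
      obtain ⟨q, rfl⟩ : ∃ q', q = q' + 1 := ⟨q - 1, by omega⟩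
      have hrest := ih q (by omega) (i := d) (by omega) le_rfl (by omega)
      have := (hurwitzSemigroup d).add_mem hrest (hgen 1 le_rfl (by omega))
      convert this using 1
      ring
    · have hrest := ih q (by omega) (i := i - 1) (by omega) (by omega) (by omega)
      have := (hurwitzSemigroup d).add_mem hrest (hgen 1 le_rfl (by omega))
      convert this using 1
      rw [add_mul]
      omega

lemma mul_add_mem_iff (hi : 0 < i) (hid : i ≤ d) : q * d + i ∈ hurwitzSemigroup d ↔ i ≤ q :=
  ⟨le_of_mul_add_mem hi hid, mul_add_mem hi hid⟩

lemma gaps_eq_image (hd : 0 < d) :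
    {m | m ∉ hurwitzSemigroup d} =
      (((range (d + 1)).sigma range).image fun x => x.2 * d + x.1 : Finset ℕ) := by
  ext m
  simp only [Set.mem_ofPred_eq, coe_image, Set.mem_image, mem_coe, mem_sigma, mem_range,
    Sigma.exists]
  constructor
  · intro hm
    have hm0 : m ≠ 0 := by rintro rfl; exact hm (zero_mem _)
    obtain ⟨q, i, hi, hid, rfl⟩ := exists_eq_mul_add_of_pos hd (Nat.pos_of_ne_zero hm0)
    exact ⟨i, q, ⟨by omega, by simpa [mul_add_mem_iff hi hid] using hm⟩, rfl⟩
  · rintro ⟨i, q, ⟨hid, hqi⟩, rfl⟩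
    rw [mul_add_mem_iff (by omega) (by omega)]
    omega

lemma ncard_gaps (hd : 0 < d) : {m | m ∉ hurwitzSemigroup d}.ncard = (d + 1) * d / 2 := by
  rw [gaps_eq_image hd, Set.ncard_coe_finset, card_image_of_injOn, card_sigma]
  · simp only [card_range, sum_range_id, Nat.add_sub_cancel]
  · rintro ⟨i, q⟩ hx ⟨i', q'⟩ hx' h
    simp only [coe_sigma, Set.mem_sigma_iff, coe_range, Set.mem_Iio] at hx hx' h
    obtain ⟨rfl, rfl⟩ := (mul_add_eq_mul_add_iff (by omega) (by omega) (by omega) (by omega)).1 h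
    rfl

end hurwitzSemigroup

/-- The numerical semigroup generated by `{s(n-1)+1 : 1 ≤ s ≤ n}` has exactly
`n(n-1)/2` gaps. -/
theorem stmt7 (n : ℕ) (hn : 2 ≤ n)
    (H : AddSubmonoid ℕ)
    (hH : H = AddSubmonoid.closure {m : ℕ | ∃ s, 1 ≤ s ∧ s ≤ n ∧ m = s * (n - 1) + 1}) :
    {m : ℕ | m ∉ H}.ncard = n * (n - 1) / 2 := by
  obtain ⟨d, rfl⟩ : ∃ d, n = d + 1 := ⟨n - 1, by omega⟩
  obtain rfl : H = hurwitzSemigroup d := by simpa using hH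
  simpa using hurwitzSemigroup.ncard_gaps (by omega)
end

section
/- Let n ≥ 2, let H be the numerical semigroup generated by {s(n-1)+1 : s = 1, ..., n}, and let d be a divisor of n^2 - n + 1 with d ∈ H. Then d = n^2 - n + 1 or d = 1 — in fact, if d ∈ H and d divides n^2-n+1 with d > 1 then d = n^2-n+1. -/
/-!
Write `m = n - 1`, so that `n^2 - n + 1 = m^2 + m + 1`. Summing generators `s m + 1` shows that every
element of `H` is `A m + B` with `B ≤ A`, where `B` counts the generators used (so `B > 0` unless the
element is `0`). If `(A m + B) q = m^2 + m + 1`, put `P = A q` and `Q = B q`, so `P m + Q = m^2 + m + 1`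
with `0 < Q ≤ P`. If `P ≤ m` the left side is at most `m^2 + m`; otherwise `P m ≥ m^2 + m` forces
`Q = 1`. Hence `q = 1`.
-/

lemma exists_mul_add_of_mem_closure {n k x : ℕ}
    (hx : x ∈ AddSubmonoid.closure {m : ℕ | ∃ s, 1 ≤ s ∧ s ≤ n ∧ m = s * k + 1}) :
    ∃ A B : ℕ, B ≤ A ∧ A ≤ n * B ∧ x = A * k + B := by
  induction hx using AddSubmonoid.closure_induction with
  | mem y hy =>
    obtain ⟨s, hs1, hsn, rfl⟩ := hy
    exact ⟨s, 1, hs1, by omega, rfl⟩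
  | zero => exact ⟨0, 0, le_rfl, by omega, by simp⟩
  | add a b _ _ ha hb =>
    obtain ⟨A₁, B₁, hB₁, hA₁, rfl⟩ := ha
    obtain ⟨A₂, B₂, hB₂, hA₂, rfl⟩ := hb
    exact ⟨A₁ + A₂, B₁ + B₂, by omega, by rw [mul_add]; omega, by ring⟩

lemma eq_one_of_mul_add_eq {m P Q : ℕ} (hQ : 0 < Q) (hQP : Q ≤ P)
    (h : P * m + Q = m * m + m + 1) : Q = 1 := by
  rcases le_or_gt P m with hPm | hmP
  · nlinarith [Nat.mul_le_mul_right m hPm]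
  · nlinarith [Nat.mul_le_mul_right m hmP]

lemma mul_add_eq_of_dvd {m A B : ℕ} (hB : 0 < B) (hBA : B ≤ A)
    (hdvd : A * m + B ∣ m * m + m + 1) : A * m + B = m * m + m + 1 := by
  obtain ⟨q, hq⟩ := hdvd
  have hq0 : 0 < q := Nat.pos_of_ne_zero (by rintro rfl; simp at hq)
  have hBq : B * q = 1 :=
    eq_one_of_mul_add_eq (Nat.mul_pos hB hq0) (Nat.mul_le_mul_right q hBA)
      (by rw [hq]; ring)
  rw [hq, Nat.eq_one_of_mul_eq_one_left hBq, mul_one]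

lemma sq_sub_self_add_one (n : ℕ) : n ^ 2 - n + 1 = (n - 1) * (n - 1) + (n - 1) + 1 := by
  cases n with
  | zero => rfl
  | succ m =>
    rw [Nat.add_sub_cancel, show (m + 1) ^ 2 = m * m + m + (m + 1) by ring, Nat.add_sub_cancel]

theorem stmt8_general (n : ℕ)
    (H : AddSubmonoid ℕ)
    (hH : H = AddSubmonoid.closure {m : ℕ | ∃ s, 1 ≤ s ∧ s ≤ n ∧ m = s * (n - 1) + 1})
    (d : ℕ) (hdH : d ∈ H) (hdvd : d ∣ n ^ 2 - n + 1) :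
    d = n ^ 2 - n + 1 := by
  subst hH
  obtain ⟨A, B, hBA, hAB, rfl⟩ := exists_mul_add_of_mem_closure hdH
  have hB : 0 < B := by
    rcases Nat.eq_zero_or_pos B with rfl | hB
    · obtain rfl : A = 0 := by simpa using hAB
      simp at hdvd
    · exact hB
  rw [sq_sub_self_add_one] at hdvd ⊢
  exact mul_add_eq_of_dvd hB hBA hdvd

/-- If `d > 1` lies in the semigroup generated by `{s(n-1)+1 : 1 ≤ s ≤ n}` and
divides `n^2 - n + 1`, then `d = n^2 - n + 1`. -/
theorem stmt8 (n : ℕ) (hn : 2 ≤ n)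
    (H : AddSubmonoid ℕ)
    (hH : H = AddSubmonoid.closure {m : ℕ | ∃ s, 1 ≤ s ∧ s ≤ n ∧ m = s * (n - 1) + 1})
    (d : ℕ) (hdH : d ∈ H) (hdvd : d ∣ n ^ 2 - n + 1) (hd1 : 1 < d) :
    d = n ^ 2 - n + 1 :=
  stmt8_general n H hH d hdH hdvd
end

section
/- Let n ≥ 2 and write any element of the semigroup generated by {s(n-1)+1 : 1 ≤ s ≤ n} which divides n^2-n+1 as d = A(n-1)+B with A ≥ B ≥ 1. If (A(n-1)+B)·C = n^2-n+1 for some C ≥ 1, then B = C = 1 and A = n. -/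
/-!
Put `m = n - 1`, so the equation reads `(A m + B) C = m² + m + 1`. Reducing modulo `m` gives
`B C ≡ 1 (mod m)`, so either `B C = 1` or `B C ≥ m + 1`. In the second case `A ≥ B` gives
`(A m + B) C ≥ B C (m + 1) ≥ (m + 1)² > m² + m + 1`, which is impossible. Hence `B = C = 1`,
and then `A m = m² + m` forces `A = m + 1 = n`.
-/

lemma Nat.succ_le_of_modEq_one {m x : ℕ} (hx : x ≡ 1 [MOD m]) (h1 : 1 < x) : m + 1 ≤ x := by
  have hdvd : m ∣ x - 1 := (Nat.modEq_iff_dvd' h1.le).1 hx.symm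
  have := Nat.le_of_dvd (by omega) hdvd
  omega

section

variable {m A B C : ℕ}

lemma mul_modEq_one_of_mul_eq (h : (A * m + B) * C = m * m + m + 1) : B * C ≡ 1 [MOD m] := by
  have hlhs : (A * m + B) * C = B * C + m * (A * C) := by ring
  have hrhs : m * m + m + 1 = 1 + m * (m + 1) := by ring
  rw [hlhs, hrhs] at h
  unfold Nat.ModEq
  rw [← Nat.add_mul_mod_self_left (B * C) m (A * C), h, Nat.add_mul_mod_self_left]

lemma mul_eq_one_of_mul_eq (hB : 0 < B) (hAB : B ≤ A) (h : (A * m + B) * C = m * m + m + 1) :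
    B * C = 1 := by
  have hC : 0 < C := Nat.pos_of_ne_zero fun hC ↦ by simp [hC] at h
  by_contra hne
  have hBC : m + 1 ≤ B * C :=
    Nat.succ_le_of_modEq_one (mul_modEq_one_of_mul_eq h) (by have := Nat.mul_pos hB hC; omega)
  have hsq : (m + 1) * (m + 1) ≤ m * m + m + 1 :=
    calc (m + 1) * (m + 1) ≤ B * C * (m + 1) := Nat.mul_le_mul_right _ hBC
      _ = (B * m + B) * C := by ring
      _ ≤ (A * m + B) * C := by gcongr
      _ = m * m + m + 1 := h
  -- only `m = 0` survives, and there the equation itself reads `B * C = 1`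
  have hm : m = 0 := by nlinarith
  subst hm
  exact hne (by simpa using h)

end

theorem stmt9_general (n A B C : ℕ) (hn : 2 ≤ n) (hB : 1 ≤ B) (hAB : B ≤ A)
    (h : (A * (n - 1) + B) * C = n ^ 2 - n + 1) :
    B = 1 ∧ C = 1 ∧ A = n := by
  obtain ⟨m, rfl⟩ : ∃ m, n = m + 1 := ⟨n - 1, by omega⟩
  have hm : 0 < m := by omega
  have hsq : (m + 1) ^ 2 = m * m + m + (m + 1) := by ring
  have key : (A * m + B) * C = m * m + m + 1 := by
    rw [Nat.add_sub_cancel, hsq] at h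
    omega
  obtain ⟨rfl, rfl⟩ := mul_eq_one.1 (mul_eq_one_of_mul_eq hB hAB key)
  refine ⟨rfl, rfl, Nat.eq_of_mul_eq_mul_right hm ?_⟩
  linarith

/-- If `A ≥ B ≥ 1`, `C ≥ 1` and `(A(n-1)+B)·C = n^2-n+1` with `n ≥ 2`, then
`B = 1`, `C = 1` and `A = n`. -/
theorem stmt9 (n A B C : ℕ) (hn : 2 ≤ n) (hB : 1 ≤ B) (hAB : B ≤ A) (hC : 1 ≤ C)
    (h : (A * (n - 1) + B) * C = n ^ 2 - n + 1) :
    B = 1 ∧ C = 1 ∧ A = n :=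
  stmt9_general n A B C hn hB hAB h
end
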